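/- If q₁ and q₂ are coprime natural numbers, then for all integers a, 𝒮(q₁·q₂, a) = 𝒮(q₁, a·q₂^{k−1}) · 𝒮(q₂, a·q₁^{k−1}), where 𝒮(q, a) = (1/q)·Σ_{d | q} ψ(d)·|W(d, a·(q/d)^{k−1})|. -/

import Mathlib

/-- The complete exponential sum `W(q,a) = Σ_{r=1, (r,q)=1}^q e(a·r^k/q)`,
with `e(z) = e^{2πiz}`. -/
noncomputable def expSumW (k q : ℕ) (a : ℤ) : ℂ :=
  ∑ r ∈ (Finset.Icc 1 q).filter (fun r => Nat.gcd r q = 1),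
    Complex.exp (2 * Real.pi * Complex.I * ((a : ℂ) * (r : ℂ) ^ k / (q : ℂ)))

/-- `𝒮(q, a) = (1/q)·Σ_{d | q} ψ(d)·|W(d, a·(q/d)^{k−1})|` with `ψ(d) = d/φ(d)`. -/
noncomputable def scriptS (k q : ℕ) (a : ℤ) : ℝ :=
  (1 / (q : ℝ)) * ∑ d ∈ q.divisors,
    ((d : ℝ) / (Nat.totient d : ℝ)) *
      ‖expSumW k d (a * ((q / d : ℕ) : ℤ) ^ (k - 1))‖
/-! By the Chinese remainder theorem every unit `u` modulo `mn` (`m`, `n` coprime) is uniquely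
`u ≡ n x (mod m)`, `u ≡ m y (mod n)` with units `x`, `y`, and then
`a u^k / (mn) ≡ a n^(k-1) x^k / m + a m^(k-1) y^k / n (mod 1)` because `k ≥ 1`; hence
`W(mn, a) = W(m, a n^(k-1)) W(n, a m^(k-1))`. The divisors of `q₁ q₂` are the products `d₁ d₂`
of divisors of `q₁` and `q₂`, and `ψ` is multiplicative, so each term of `𝒮(q₁ q₂, a)` splits
as a term of `𝒮(q₁, a q₂^(k-1))` times a term of `𝒮(q₂, a q₁^(k-1))`. -/

open Finset

lemma sum_filter_coprime_Icc_eq_sum_units {M : Type*} [AddCommMonoid M] (q : ℕ) [NeZero q]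
    (F : ZMod q → M) :
    ∑ r ∈ (Icc 1 q).filter (fun r => r.gcd q = 1), F r = ∑ u : (ZMod q)ˣ, F u := by
  -- `r ↦ r mod q` has inverse `u ↦ (u - 1).val + 1`, whose range `[1, q]` also covers `q = 1`
  have hlift (z : ZMod q) : (((z - 1).val + 1 : ℕ) : ZMod q) = z := by simp
  refine sum_bij' (fun r hr => ZMod.unitOfCoprime r (mem_filter.1 hr).2)
    (fun u _ => ((u : ZMod q) - 1).val + 1) (fun _ _ => mem_univ _) (fun u _ => ?_)
    (fun r hr => ?_) (fun u _ => Units.ext (by simp [hlift])) (fun _ _ => by simp)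
  · refine mem_filter.2 ⟨mem_Icc.2 ⟨by omega, ZMod.val_lt _⟩, ?_⟩
    exact (ZMod.isUnit_iff_coprime _ q).1 (by rw [hlift]; exact u.isUnit)
  · obtain ⟨hr1, hrq⟩ := mem_Icc.1 (mem_filter.1 hr).1
    rw [ZMod.coe_unitOfCoprime, ← Nat.cast_one, ← Nat.cast_sub hr1, ZMod.val_natCast,
      Nat.mod_eq_of_lt (by omega)]
    omega

lemma expSumW_eq_sum_units (k q : ℕ) [NeZero q] (a : ℤ) :
    expSumW k q a = ∑ u : (ZMod q)ˣ, ZMod.stdAddChar ((a : ZMod q) * (u : ZMod q) ^ k) := by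
  rw [expSumW,
    ← sum_filter_coprime_Icc_eq_sum_units q fun z => ZMod.stdAddChar ((a : ZMod q) * z ^ k)]
  refine sum_congr rfl fun r _ => ?_
  have h := ZMod.stdAddChar_coe (N := q) (a * r ^ k)
  push_cast at h
  rw [h, ← mul_div_assoc]

lemma sum_divisors_mul_of_coprime {M : Type*} [AddCommMonoid M] {m n : ℕ} (h : m.Coprime n)
    (f : ℕ → M) :
    ∑ d ∈ (m * n).divisors, f d = ∑ d₁ ∈ m.divisors, ∑ d₂ ∈ n.divisors, f (d₁ * d₂) := by
  rw [h.divisors_mul, sum_map, ← sum_product' (f := fun d₁ d₂ => f (d₁ * d₂))]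
  exact sum_attach (m.divisors ×ˢ n.divisors) fun p => f (p.1 * p.2)

lemma stdAddChar_eq_mul_of_chineseRemainder {m n : ℕ} [NeZero m] [NeZero n] (h : m.Coprime n)
    {z : ZMod (m * n)} {x : ZMod m} {y : ZMod n}
    (hz : ZMod.chineseRemainder h z = (n * x, m * y)) :
    ZMod.stdAddChar z = ZMod.stdAddChar x * ZMod.stdAddChar y := by
  obtain ⟨X, rfl⟩ := ZMod.intCast_surjective x
  obtain ⟨Y, rfl⟩ := ZMod.intCast_surjective y
  have hz' : z = ((n * X + m * Y : ℤ) : ZMod (m * n)) := by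
    refine (ZMod.chineseRemainder h).injective ?_
    rw [hz, map_intCast]
    ext <;> simp
  have hm : (m : ℂ) ≠ 0 := Nat.cast_ne_zero.2 (NeZero.ne m)
  have hn : (n : ℂ) ≠ 0 := Nat.cast_ne_zero.2 (NeZero.ne n)
  rw [hz', ZMod.stdAddChar_coe, ZMod.stdAddChar_coe, ZMod.stdAddChar_coe,
    ← Complex.exp_add]
  congr 1
  push_cast
  field_simp

lemma expSumW_mul_of_coprime {k : ℕ} (hk : k ≠ 0) {m n : ℕ} [NeZero m] [NeZero n]
    (h : m.Coprime n) (a : ℤ) :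
    expSumW k (m * n) a = expSumW k m (a * n ^ (k - 1)) * expSumW k n (a * m ^ (k - 1)) := by
  let Φ : (ZMod (m * n))ˣ ≃* (ZMod m)ˣ × (ZMod n)ˣ :=
    (Units.mapEquiv (ZMod.chineseRemainder h).toMulEquiv).trans MulEquiv.prodUnits
  let e : (ZMod m)ˣ × (ZMod n)ˣ ≃ (ZMod (m * n))ˣ :=
    ((Equiv.mulLeft (ZMod.unitOfCoprime n h.symm)).prodCongr
      (Equiv.mulLeft (ZMod.unitOfCoprime m h))).trans Φ.symm
  have he (x : (ZMod m)ˣ) (y : (ZMod n)ˣ) :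
      ZMod.chineseRemainder h (e (x, y)) = (n * (x : ZMod m), m * (y : ZMod n)) := by
    change (((Φ (e (x, y))).1 : ZMod m), ((Φ (e (x, y))).2 : ZMod n)) = _
    simp [e]
  rw [expSumW_eq_sum_units, expSumW_eq_sum_units, expSumW_eq_sum_units, sum_mul_sum,
    ← e.sum_comp, Fintype.sum_prod_type]
  refine sum_congr rfl fun x _ => sum_congr rfl fun y _ =>
    stdAddChar_eq_mul_of_chineseRemainder h ?_
  obtain ⟨j, rfl⟩ := Nat.exists_eq_succ_of_ne_zero hk
  rw [map_mul, map_pow, he, map_intCast]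
  ext <;> simp [pow_succ] <;> ring

noncomputable def scriptSTerm (k q : ℕ) (a : ℤ) (d : ℕ) : ℝ :=
  ((d : ℝ) / (Nat.totient d : ℝ)) * ‖expSumW k d (a * ((q / d : ℕ) : ℤ) ^ (k - 1))‖

lemma scriptS_eq_sum_scriptSTerm (k q : ℕ) (a : ℤ) :
    scriptS k q a = (1 / (q : ℝ)) * ∑ d ∈ q.divisors, scriptSTerm k q a d := rfl

lemma scriptSTerm_mul_of_coprime {k : ℕ} (hk : k ≠ 0) {q₁ q₂ d₁ d₂ : ℕ}
    (hco : q₁.Coprime q₂) (hd₁ : d₁ ∈ q₁.divisors) (hd₂ : d₂ ∈ q₂.divisors) (a : ℤ) :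
    scriptSTerm k (q₁ * q₂) a (d₁ * d₂) =
      scriptSTerm k q₁ (a * q₂ ^ (k - 1)) d₁ * scriptSTerm k q₂ (a * q₁ ^ (k - 1)) d₂ := by
  have hd : d₁.Coprime d₂ :=
    (hco.coprime_dvd_left (Nat.dvd_of_mem_divisors hd₁)).coprime_dvd_right
      (Nat.dvd_of_mem_divisors hd₂)
  have hd₁0 := Nat.pos_of_mem_divisors hd₁
  have hd₂0 := Nat.pos_of_mem_divisors hd₂
  have : NeZero d₁ := ⟨hd₁0.ne'⟩
  have : NeZero d₂ := ⟨hd₂0.ne'⟩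
  obtain ⟨c₁, rfl⟩ := Nat.dvd_of_mem_divisors hd₁
  obtain ⟨c₂, rfl⟩ := Nat.dvd_of_mem_divisors hd₂
  have hquot : d₁ * c₁ * (d₂ * c₂) / (d₁ * d₂) = c₁ * c₂ := by
    rw [mul_mul_mul_comm, Nat.mul_div_cancel_left _ (Nat.mul_pos hd₁0 hd₂0)]
  simp only [scriptSTerm]
  rw [hquot, Nat.mul_div_cancel_left _ hd₁0, Nat.mul_div_cancel_left _ hd₂0,
    expSumW_mul_of_coprime hk hd, norm_mul, Nat.totient_mul hd]
  push_cast
  ring_nf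

theorem stmt13_general (k : ℕ) (hk : 2 ≤ k) (q₁ q₂ : ℕ)
    (hco : Nat.Coprime q₁ q₂) (a : ℤ) :
    scriptS k (q₁ * q₂) a =
      scriptS k q₁ (a * (q₂ : ℤ) ^ (k - 1)) * scriptS k q₂ (a * (q₁ : ℤ) ^ (k - 1)) := by
  simp only [scriptS_eq_sum_scriptSTerm]
  rw [sum_divisors_mul_of_coprime hco, mul_mul_mul_comm, sum_mul_sum, one_div_mul_one_div,
    Nat.cast_mul]
  congr 1
  exact sum_congr rfl fun d₁ hd₁ => sum_congr rfl fun d₂ hd₂ =>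
    scriptSTerm_mul_of_coprime (by omega) hco hd₁ hd₂ a

/-- If `q₁` and `q₂` are coprime natural numbers, then for all integers
`a`, `𝒮(q₁·q₂, a) = 𝒮(q₁, a·q₂^{k−1})·𝒮(q₂, a·q₁^{k−1})`. -/
theorem stmt13 (k : ℕ) (hk : 2 ≤ k) (q₁ q₂ : ℕ) (hq₁ : 0 < q₁) (hq₂ : 0 < q₂)
    (hco : Nat.Coprime q₁ q₂) (a : ℤ) :
    scriptS k (q₁ * q₂) a =
      scriptS k q₁ (a * (q₂ : ℤ) ^ (k - 1)) * scriptS k q₂ (a * (q₁ : ℤ) ^ (k - 1)) :=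
  stmt13_general k hk q₁ q₂ hco a
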